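/- Fix ν > 0, b ≥ 0, and a Lévy density λ with all relevant integrals finite. Let ξ have density s ↦ Ψ_ν(b+s) s^{ν-1}/(Γ(ν)(Ψ(b+1)-Ψ(b))), where Ψ_ν(c) = ∫₀^∞(1-e^{-t}) t^ν e^{-ct} λ(t) dt and Ψ is the Lévy exponent of λ. Conditionally on ξ = s, let (O,U) have density h(v,w) = e^{-v} e^{-(b+s)(v+w)} (v+w)^ν λ(v+w)/Ψ_ν(b+s). Then (O,U) is marginally distributed with density (v,w) ↦ e^{-v} e^{-b(v+w)} λ(v+w)/(Ψ(b+1)-Ψ(b)), independently of ξ(O+U), which has Gamma(ν,1) distribution. -/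

import Mathlib

/-!
Write `t = O + U`. The joint density of `(ξ, O, U)` factors as `t · f(O, U) · γ(ξ t)`, where `f` is
the claimed density of `(O, U)` and `γ` the Gamma(ν, 1) density: the factor `Ψ_ν(b + s)` cancels,
and `s^(ν-1) t^ν e^(-s t) = t · (s t)^(ν-1) e^(-s t)`. Hence, given `(O, U) = (v, w)`, the variable
`ξ t` has density `γ` whatever `(v, w)` is, so the law of `((O, U), ξ t)` is the product of `f` and
Gamma(ν, 1). Marginals and independence follow, and `f` is normalised because `μ` and `γ` are.
-/

open MeasureTheory ProbabilityTheory Real Set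

/-- The Gamma(ν,1) distribution on ℝ, supported on (0,∞). -/
noncomputable def gammaM (a : ℝ) : Measure ℝ :=
  volume.withDensity (fun t => ENNReal.ofReal
    (if 0 < t then t ^ (a - 1) * Real.exp (-t) / Real.Gamma a else 0))

open scoped ENNReal

noncomputable def gammaDensity (a t : ℝ) : ℝ≥0∞ :=
  ENNReal.ofReal (if 0 < t then t ^ (a - 1) * exp (-t) / Gamma a else 0)

lemma gammaM_eq_withDensity (a : ℝ) : gammaM a = volume.withDensity (gammaDensity a) := rfl

@[fun_prop]
lemma measurable_gammaDensity (a : ℝ) : Measurable (gammaDensity a) :=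
  Measurable.ennreal_ofReal (Measurable.ite measurableSet_Ioi (by fun_prop) measurable_const)

lemma gammaM_eq_gammaMeasure (a : ℝ) : gammaM a = gammaMeasure a 1 := by
  refine withDensity_congr_ae ?_
  filter_upwards [Measure.ae_ne volume 0] with t ht
  rcases ht.lt_or_gt with ht | ht
  · simp [gammaPDF_of_neg ht, ht.not_gt]
  · simp [gammaPDF_of_nonneg ht.le, ht]
    ring_nf

lemma isProbabilityMeasure_gammaM {a : ℝ} (ha : 0 < a) : IsProbabilityMeasure (gammaM a) := by
  rw [gammaM_eq_gammaMeasure]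
  exact isProbabilityMeasure_gammaMeasure ha one_pos

noncomputable def overshootDensity (b D : ℝ) (l : ℝ → ℝ) (q : ℝ × ℝ) : ℝ≥0∞ :=
  ENNReal.ofReal (if 0 < q.1 ∧ 0 < q.2 then
    exp (-q.1) * exp (-(b * (q.1 + q.2))) * l (q.1 + q.2) / D else 0)

@[fun_prop]
lemma measurable_overshootDensity (b D : ℝ) {l : ℝ → ℝ} (hl : Measurable l) :
    Measurable (overshootDensity b D l) := by
  unfold overshootDensity
  refine Measurable.ennreal_ofReal (Measurable.ite ?_ (by fun_prop) measurable_const)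
  exact (measurableSet_lt measurable_const measurable_fst).inter
      (measurableSet_lt measurable_const measurable_snd)

lemma add_pos_of_overshootDensity_ne_zero {b D : ℝ} {l : ℝ → ℝ} {q : ℝ × ℝ}
    (hq : overshootDensity b D l q ≠ 0) : 0 < q.1 + q.2 := by
  by_contra hsum
  have hout : ¬ (0 < q.1 ∧ 0 < q.2) := fun h => hsum (add_pos h.1 h.2)
  exact hq (by simp [overshootDensity, hout])

lemma ofReal_jointDensity_eq {ν : ℝ} (hν : 0 < ν) {b : ℝ} (D : ℝ) (l P : ℝ → ℝ)
    (hP : ∀ s, 0 < s → P (b + s) ≠ 0) (s v w : ℝ) :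
    ENNReal.ofReal (if 0 < s ∧ 0 < v ∧ 0 < w then
        (P (b + s) * s ^ (ν - 1) / (Gamma ν * D)) *
          (exp (-v) * exp (-((b + s) * (v + w))) * (v + w) ^ ν * l (v + w) / P (b + s))
      else 0) =
      ENNReal.ofReal (v + w) * overshootDensity b D l (v, w) * gammaDensity ν (s * (v + w)) := by
  by_cases hvw : 0 < v ∧ 0 < w
  swap
  · simp [overshootDensity, hvw]
  have ht : 0 < v + w := add_pos hvw.1 hvw.2
  by_cases hs : 0 < s
  swap
  · have hst : ¬ 0 < s * (v + w) := fun h => hs (pos_of_mul_pos_left h ht.le)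
    simp [gammaDensity, hs, hst]
  have hΓ : 0 < Gamma ν := Gamma_pos_of_pos hν
  have hc : 0 < s ∧ 0 < v ∧ 0 < w := ⟨hs, hvw⟩
  simp only [overshootDensity, gammaDensity, if_pos hvw, if_pos hc, if_pos (mul_pos hs ht)]
  rw [← ENNReal.ofReal_mul ht.le, ← ENNReal.ofReal_mul' (by positivity)]
  congr 1
  have hexp : exp (-((b + s) * (v + w))) = exp (-(b * (v + w))) * exp (-(s * (v + w))) := by
    rw [← exp_add]; ring_nf
  have hpow : (v + w) ^ ν = (v + w) ^ (ν - 1) * (v + w) := by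
    rw [← rpow_add_one ht.ne']; ring_nf
  rw [hexp, hpow, mul_rpow hs.le ht.le]
  field_simp [hP s hs]

lemma lintegral_ofReal_mul_comp_mul_right {t : ℝ} (ht : 0 < t) {h : ℝ → ℝ≥0∞}
    (hh : Measurable h) : ∫⁻ s, ENNReal.ofReal t * h (s * t) = ∫⁻ y, h y := by
  have hmap := lintegral_map (μ := volume) hh (measurable_mul_const t)
  rw [Real.map_volume_mul_right ht.ne', lintegral_smul_measure, abs_of_pos (inv_pos.2 ht)]
    at hmap
  rw [lintegral_const_mul (f := fun s => h (s * t)) _ (hh.comp (measurable_mul_const t)), ← hmap,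
    smul_eq_mul, ← mul_assoc, ← ENNReal.ofReal_mul ht.le, mul_inv_cancel₀ ht.ne',
    ENNReal.ofReal_one, one_mul]

theorem map_withDensity_mul_scale_eq_prod {X : Type*} [MeasurableSpace X] (ρ : Measure X)
    [SFinite ρ] {f : X → ℝ≥0∞} {g : ℝ → ℝ≥0∞} {τ : X → ℝ} (hf : Measurable f)
    (hg : Measurable g) (hτ : Measurable τ) (hτpos : ∀ x, f x ≠ 0 → 0 < τ x) :
    ((volume.prod ρ).withDensity
        (fun p => ENNReal.ofReal (τ p.2) * f p.2 * g (p.1 * τ p.2))).map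
      (fun p => (p.2, p.1 * τ p.2)) = (ρ.withDensity f).prod (volume.withDensity g) := by
  have hΦ : Measurable fun p : ℝ × X => (p.2, p.1 * τ p.2) := by fun_prop
  rw [prod_withDensity hf hg]
  refine Measure.ext_of_lintegral _ fun φ hφ => ?_
  have hfiber : ∀ x, ∫⁻ s, ENNReal.ofReal (τ x) * f x * g (s * τ x) * φ (x, s * τ x)
      = f x * ∫⁻ y, g y * φ (x, y) := by
    intro x
    rcases eq_or_ne (f x) 0 with hx | hx
    · simp [hx]
    have hgφ : Measurable fun y => g y * φ (x, y) := by fun_prop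
    rw [← lintegral_ofReal_mul_comp_mul_right (hτpos x hx) hgφ,
      ← lintegral_const_mul _ (by fun_prop)]
    refine lintegral_congr fun s => ?_
    ring
  rw [lintegral_map hφ hΦ, lintegral_withDensity_eq_lintegral_mul _ (by fun_prop) (by fun_prop),
    lintegral_withDensity_eq_lintegral_mul _ (by fun_prop) hφ,
    lintegral_prod_symm _ (by fun_prop), lintegral_prod _ (by fun_prop)]
  refine lintegral_congr fun x => ?_
  simp only [Pi.mul_apply]
  rw [hfiber, ← lintegral_const_mul _ (by fun_prop)]
  simp only [mul_assoc]

theorem map_eq_and_indepFun_of_map_prod_eq_prod {Ω α β : Type*} [MeasurableSpace Ω]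
    [MeasurableSpace α] [MeasurableSpace β] {μ : Measure Ω} [IsProbabilityMeasure μ]
    {X : Ω → α} {Y : Ω → β} (hX : Measurable X) (hY : Measurable Y) {P : Measure α}
    {Q : Measure β} [IsProbabilityMeasure Q]
    (hXY : μ.map (fun ω => (X ω, Y ω)) = P.prod Q) :
    μ.map X = P ∧ IndepFun X Y μ ∧ μ.map Y = Q := by
  have hXP : μ.map X = P := by
    have h := congrArg (Measure.map Prod.fst) hXY
    rwa [Measure.map_map measurable_fst (hX.prodMk hY), Measure.map_fst_prod, measure_univ,
      one_smul] at h
  have : IsProbabilityMeasure P := hXP ▸ Measure.isProbabilityMeasure_map hX.aemeasurable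
  have hYQ : μ.map Y = Q := by
    have h := congrArg (Measure.map Prod.snd) hXY
    rwa [Measure.map_map measurable_snd (hX.prodMk hY), Measure.map_snd_prod, measure_univ,
      one_smul] at h
  refine ⟨hXP, ?_, hYQ⟩
  rwa [indepFun_iff_map_prod_eq_prod_map_map hX.aemeasurable hY.aemeasurable, hXP, hYQ]

theorem overshoot_undershoot_independence_general
    {Ω : Type*} [MeasureSpace Ω] (μ : Measure Ω) [IsProbabilityMeasure μ]
    (ν b : ℝ) (hν : 0 < ν) (hb : 0 ≤ b)
    (l : ℝ → ℝ) (hlmeas : Measurable l)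
    -- the Lévy exponent Ψ of λ and the exponent Ψ_ν of the tilted density:
    (Ψ : ℝ → ℝ)
    (Ψν : ℝ → ℝ)
    (hΨνfin : ∀ c, 0 ≤ c → 0 < Ψν c)
    (ξ O U : Ω → ℝ) (hξ : Measurable ξ) (hO : Measurable O) (hU : Measurable U)
    -- joint density of (ξ, O, U): the marginal density of ξ times the conditional density h of
    -- (O,U) given ξ = s:
    (hjoint : μ.map (fun ω => (ξ ω, O ω, U ω)) =
      (volume : Measure (ℝ × ℝ × ℝ)).withDensity (fun p => ENNReal.ofReal
        (if 0 < p.1 ∧ 0 < p.2.1 ∧ 0 < p.2.2 then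
          (Ψν (b + p.1) * p.1 ^ (ν - 1) / (Real.Gamma ν * (Ψ (b + 1) - Ψ b))) *
            (Real.exp (-p.2.1) * Real.exp (-((b + p.1) * (p.2.1 + p.2.2))) *
              (p.2.1 + p.2.2) ^ ν * l (p.2.1 + p.2.2) / Ψν (b + p.1))
        else 0))) :
    μ.map (fun ω => (O ω, U ω)) =
      (volume : Measure (ℝ × ℝ)).withDensity (fun q => ENNReal.ofReal
        (if 0 < q.1 ∧ 0 < q.2 then
          Real.exp (-q.1) * Real.exp (-(b * (q.1 + q.2))) * l (q.1 + q.2) / (Ψ (b + 1) - Ψ b)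
        else 0)) ∧
    IndepFun (fun ω => (O ω, U ω)) (fun ω => ξ ω * (O ω + U ω)) μ ∧
    μ.map (fun ω => ξ ω * (O ω + U ω)) = gammaM ν := by
  set f := overshootDensity b (Ψ (b + 1) - Ψ b) l
  have hjoint' : μ.map (fun ω => (ξ ω, O ω, U ω)) = (volume.prod volume).withDensity fun p =>
      ENNReal.ofReal (p.2.1 + p.2.2) * f p.2 * gammaDensity ν (p.1 * (p.2.1 + p.2.2)) := by
    rw [hjoint, ← Measure.volume_eq_prod]
    congr with ⟨s, v, w⟩
    exact ofReal_jointDensity_eq hν _ l Ψν (fun s hs => (hΨνfin _ (by positivity)).ne') s v w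
  have hlaw : μ.map (fun ω => ((O ω, U ω), ξ ω * (O ω + U ω))) =
      (volume.withDensity f).prod (gammaM ν) := by
    rw [gammaM_eq_withDensity, ← map_withDensity_mul_scale_eq_prod volume
      (measurable_overshootDensity _ _ hlmeas) (measurable_gammaDensity ν) (by fun_prop)
      fun _ => add_pos_of_overshootDensity_ne_zero,
      ← hjoint', Measure.map_map (by fun_prop) (by fun_prop)]
    rfl
  have := isProbabilityMeasure_gammaM hν
  exact map_eq_and_indepFun_of_map_prod_eq_prod (by fun_prop) (by fun_prop) hlaw

theorem overshoot_undershoot_independence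
    {Ω : Type*} [MeasureSpace Ω] (μ : Measure Ω) [IsProbabilityMeasure μ]
    (ν b : ℝ) (hν : 0 < ν) (hb : 0 ≤ b)
    (l : ℝ → ℝ) (hlmeas : Measurable l) (hlpos : ∀ t, 0 < t → 0 < l t)
    (hlint : IntegrableOn (fun t => min 1 t * l t) (Ioi 0))
    -- the Lévy exponent Ψ of λ and the exponent Ψ_ν of the tilted density:
    (Ψ : ℝ → ℝ) (hΨ : ∀ s, Ψ s = ∫ t in Ioi (0:ℝ), (1 - Real.exp (-(s * t))) * l t)
    (Ψν : ℝ → ℝ)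
    (hΨν : ∀ c, Ψν c = ∫ t in Ioi (0:ℝ), (1 - Real.exp (-t)) * t ^ ν * Real.exp (-(c * t)) * l t)
    (hfin : 0 < Ψ (b + 1) - Ψ b) (hΨνfin : ∀ c, 0 ≤ c → 0 < Ψν c)
    (hΨνint : IntegrableOn (fun s => Ψν (b + s) * s ^ (ν - 1)) (Ioi 0))
    (ξ O U : Ω → ℝ) (hξ : Measurable ξ) (hO : Measurable O) (hU : Measurable U)
    -- joint density of (ξ, O, U): the marginal density of ξ times the conditional density h of
    -- (O,U) given ξ = s:
    (hjoint : μ.map (fun ω => (ξ ω, O ω, U ω)) =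
      (volume : Measure (ℝ × ℝ × ℝ)).withDensity (fun p => ENNReal.ofReal
        (if 0 < p.1 ∧ 0 < p.2.1 ∧ 0 < p.2.2 then
          (Ψν (b + p.1) * p.1 ^ (ν - 1) / (Real.Gamma ν * (Ψ (b + 1) - Ψ b))) *
            (Real.exp (-p.2.1) * Real.exp (-((b + p.1) * (p.2.1 + p.2.2))) *
              (p.2.1 + p.2.2) ^ ν * l (p.2.1 + p.2.2) / Ψν (b + p.1))
        else 0))) :
    μ.map (fun ω => (O ω, U ω)) =
      (volume : Measure (ℝ × ℝ)).withDensity (fun q => ENNReal.ofReal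
        (if 0 < q.1 ∧ 0 < q.2 then
          Real.exp (-q.1) * Real.exp (-(b * (q.1 + q.2))) * l (q.1 + q.2) / (Ψ (b + 1) - Ψ b)
        else 0)) ∧
    IndepFun (fun ω => (O ω, U ω)) (fun ω => ξ ω * (O ω + U ω)) μ ∧
    μ.map (fun ω => ξ ω * (O ω + U ω)) = gammaM ν :=
  overshoot_undershoot_independence_general μ ν b hν hb l hlmeas Ψ Ψν hΨνfin ξ O U hξ hO hU hjoint
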